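/- Let φ, Ω̄, R : ℝ³ → ℝ with φ and Ω̄ twice differentiable at a point p, let k̃ ≠ 0 be a real constant, and suppose the (flat-background) Yamabe equation holds at p: 4 Ω̄(p)² Δφ(p) − 4 ⟨∇Ω̄(p), ∇φ(p)⟩ Ω̄(p) − ( (1/2) R(p) Ω̄(p)² + 2 Ω̄(p) ΔΩ̄(p) − 3 ⟨∇Ω̄(p), ∇Ω̄(p)⟩ ) φ(p) − (1/3) k̃² φ(p)⁵ = 0, where ∇ denotes the gradient and Δ the Euclidean Laplacian. If Ω̄(p) = 0 and φ(p) > 0, then ⟨∇Ω̄(p), ∇Ω̄(p)⟩ = (k̃²/9) φ(p)⁴. In particular, boundary values of a positive regular solution φ on the zero set of Ω̄ cannot be prescribed freely: they are determined by |∇Ω̄|² = k̃² φ⁴ / 9. -/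
import Mathlib


open scoped RealInnerProductSpace

/-- The Euclidean Laplacian of `f : ℝ³ → ℝ`, as the sum of the second partial
derivatives along the coordinate directions. -/
noncomputable def euclideanLaplacian (f : EuclideanSpace ℝ (Fin 3) → ℝ)
    (x : EuclideanSpace ℝ (Fin 3)) : ℝ :=
  ∑ i : Fin 3,
    fderiv ℝ (fun y => fderiv ℝ f y (EuclideanSpace.single i 1)) x
      (EuclideanSpace.single i 1)

/-- If the (flat-background) Yamabe equation holds at a point `p` where the
boundary defining function `Ω̄` vanishes and the solution `φ` is positive, then
the boundary value of `φ` is forced: `|∇Ω̄|² = k̃² φ⁴ / 9` at `p`. -/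
theorem yamabe_boundary_values
    (φ Ω R : EuclideanSpace ℝ (Fin 3) → ℝ) (p : EuclideanSpace ℝ (Fin 3))
    (k : ℝ) (hk : k ≠ 0)
    (hφ : ContDiffAt ℝ 2 φ p) (hΩ : ContDiffAt ℝ 2 Ω p)
    (hYamabe :
      4 * (Ω p) ^ 2 * euclideanLaplacian φ p
        - 4 * ⟪gradient Ω p, gradient φ p⟫ * Ω p
        - ((1 / 2) * R p * (Ω p) ^ 2 + 2 * Ω p * euclideanLaplacian Ω p
            - 3 * ⟪gradient Ω p, gradient Ω p⟫) * φ p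
        - (1 / 3) * k ^ 2 * (φ p) ^ 5 = 0)
    (hΩ0 : Ω p = 0) (hφpos : 0 < φ p) :
    ⟪gradient Ω p, gradient Ω p⟫ = k ^ 2 / 9 * (φ p) ^ 4 := by
  rw [hΩ0] at hYamabe
  have h : 3 * ⟪gradient Ω p, gradient Ω p⟫ * φ p = (1/3) * k^2 * (φ p)^5 := by linarith
  have hφne : φ p ≠ 0 := ne_of_gt hφpos
  field_simp at h ⊢
  nlinarith [h]
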